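/- For integers r ≥ 1, n ≥ 2r, and every 1 ≤ i ≤ r: M(C(2r−i, r)) = C(n−i, r−i) and M(C(2r, r) − C(2r−i, r−i)) = C(n−1, r−1) + C(n−2, r−1) + ⋯ + C(n−i, r−1). -/

import Mathlib

/-- The ground set `[n] = {1, …, n}` as a finset of naturals. -/
def ground (n : ℕ) : Finset ℕ := Finset.Icc 1 n

/-- The nested condition `j ∈ e σ₁ (j+1 ∈ e σ₂ (⋯))` determined by a sequence `σ`
over `{∧, ∨}` (where `false` encodes `∧` and `true` encodes `∨`). -/
def setCond (e : Finset ℕ) : ℕ → List Bool → Bool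
  | j, [] => decide (j ∈ e)
  | j, false :: s => decide (j ∈ e) && setCond e (j + 1) s
  | j, true :: s => decide (j ∈ e) || setCond e (j + 1) s

/-- `Θ_r = Υ_r ∪ {α, ω}` (elements of `Υ_r` are sequences over `{∧, ∨}`, with
`false` encoding `∧` and `true` encoding `∨`). -/
inductive Theta where
  | alpha : Theta
  | seq (σ : List Bool) : Theta
  | omega : Theta

/-- Membership in `Θ_r`: a sequence must contain fewer than `r` symbols `∧`
and fewer than `r` symbols `∨`. -/
def Theta.valid (r : ℕ) : Theta → Prop
  | .seq σ => σ.count false < r ∧ σ.count true < r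
  | _ => True

/-- `T_r(σ)` for `σ ∈ Θ_r`: the `r`-subsets of `[n]` satisfying the nested condition
given by `σ`; `T_r(α) = ∅` and `T_r(ω) = the family of all r-subsets of [n]`. -/
def Theta.Tset (n r : ℕ) : Theta → Finset (Finset ℕ)
  | .alpha => ∅
  | .seq σ => (Finset.powersetCard r (ground n)).filter (fun e => setCond e 1 σ = true)
  | .omega => Finset.powersetCard r (ground n)

/-- Encode the symbols for the lexicographic comparison: `∧ ↦ 0`, `* ↦ 1`, `∨ ↦ 2`. -/
def symCode (b : Bool) : ℕ := if b then 2 else 0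

/-- The order on `Θ_r`: `α` is minimal, `ω` is maximal, and sequences are compared
lexicographically after appending `*`, with `∧ < * < ∨`. -/
def Theta.lt : Theta → Theta → Prop
  | _, .alpha => False
  | .alpha, _ => True
  | .omega, _ => False
  | _, .omega => True
  | .seq σ, .seq τ => List.Lex (· < ·) (σ.map symCode ++ [1]) (τ.map symCode ++ [1])

/-- The position of an element of `Θ_r` in the linear order on `Θ_r`
(the number of elements of `Θ_r` strictly below it; `α` has position `0`). -/
noncomputable def Theta.posOf (r : ℕ) (t : Theta) : ℕ :=
  Set.ncard {x : Theta | x.valid r ∧ x.lt t}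

/-- The blocker `B(F)`: the `r`-subsets of `[n]` meeting every member of `F`. -/
def blockerT (n r : ℕ) (F : Finset (Finset ℕ)) : Finset (Finset ℕ) :=
  (Finset.powersetCard r (ground n)).filter (fun e => ∀ f ∈ F, (e ∩ f).Nonempty)

/-- `σ̄`: interchange `∧` and `∨`; `ᾱ = ω` and `ω̄ = α`. -/
def Theta.bar : Theta → Theta
  | .alpha => .omega
  | .seq σ => .seq (σ.map not)
  | .omega => .alpha

/-!
Transport `Θ_r` to a linear order through the codes `σ*`. The elements below `∧^k` are `α` and
the sequences beginning with `∧^{k+1}`; there are `C(a+b, a) - 1` sequences with fewer than `a`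
symbols `∧` and fewer than `b` symbols `∨` (Pascal's rule), so `∧^{i-1}` sits at position
`C(2r-i, r)`. Interchanging `∧` and `∨` reverses the order, so `∨^{i-1}` has as many elements
above it as `∧^{i-1}` has below it, which puts it at position `C(2r, r) - C(2r-i, r-i)`.
Finally `T_r(∧^{i-1})` consists of the `r`-sets containing `[i]`, `T_r(∨^{i-1})` of those
meeting `[i]`, and the count of the latter telescopes by Pascal's rule.
-/

open Finset

section LinearOrder

variable {α : Type*} [LinearOrder α] {S : Set α}

lemma strictMonoOn_ncard_lt (hS : S.Finite) :
    StrictMonoOn (fun t => {x ∈ S | x < t}.ncard) S := by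
  intro s hs t _ hst
  refine Set.ncard_lt_ncard ⟨fun x hx => ⟨hx.1, hx.2.trans hst⟩, fun h => ?_⟩
    (hS.subset fun x hx => hx.1)
  exact lt_irrefl s (h ⟨hs, hst⟩).2

lemma ncard_lt_add_one_add_ncard_gt (hS : S.Finite) {t : α} (ht : t ∈ S) :
    {x ∈ S | x < t}.ncard + 1 + {x ∈ S | t < x}.ncard = S.ncard := by
  have hsplit : S \ {t} = {x ∈ S | x < t} ∪ {x ∈ S | t < x} := by
    ext x
    simp only [Set.mem_sdiff, Set.mem_singleton_iff, Set.mem_union, Set.mem_ofPred_eq]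
    constructor
    · rintro ⟨hx, hxt⟩
      rcases lt_or_gt_of_ne hxt with h | h
      exacts [Or.inl ⟨hx, h⟩, Or.inr ⟨hx, h⟩]
    · rintro (⟨hx, h⟩ | ⟨hx, h⟩)
      exacts [⟨hx, h.ne⟩, ⟨hx, h.ne'⟩]
  have hdisj : Disjoint {x ∈ S | x < t} {x ∈ S | t < x} :=
    Set.disjoint_left.2 fun x h₁ h₂ => lt_asymm h₁.2 h₂.2
  rw [← Set.ncard_sdiff_singleton_add_one ht hS, hsplit,
    Set.ncard_union_eq hdisj (hS.subset fun x hx => hx.1) (hS.subset fun x hx => hx.1)]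
  omega

end LinearOrder

lemma Finset.card_filter_powersetCard_not_disjoint_add_choose {α : Type*} [DecidableEq α]
    (s t : Finset α) (n : ℕ) (hst : s ⊆ t) :
    #((t.powersetCard n).filter (fun e => ¬Disjoint s e)) + (#t - #s).choose n =
      (#t).choose n := by
  have hdisj : (t.powersetCard n).filter (Disjoint s) = (t \ s).powersetCard n := by
    ext e
    simp [mem_powersetCard, subset_sdiff, disjoint_comm, and_right_comm]
  rw [← card_sdiff_of_subset hst, ← card_powersetCard, ← hdisj, ← card_powersetCard,
    add_comm, card_filter_add_card_filter_not]

lemma Nat.sum_Icc_choose_sub_add_choose (k : ℕ) {n i : ℕ} (hi : i ≤ n) :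
    ∑ j ∈ Icc 1 i, (n - j).choose k + (n - i).choose (k + 1) = n.choose (k + 1) := by
  induction i with
  | zero => simp
  | succ i ih =>
    have hpascal :
        (n - i).choose (k + 1) = (n - (i + 1)).choose k + (n - (i + 1)).choose (k + 1) := by
      rw [show n - i = n - (i + 1) + 1 by omega, Nat.choose_succ_succ']
    rw [Finset.sum_Icc_succ_top (by omega), ← ih (by omega), hpascal]
    ring

def boundedWords (a b : ℕ) : Set (List Bool) := {σ | σ.count false < a ∧ σ.count true < b}

lemma boundedWords_finite (a b : ℕ) : (boundedWords a b).Finite := by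
  refine (List.finite_length_le Bool (a + b)).subset fun σ hσ => ?_
  have := List.count_true_add_count_false σ
  simp only [boundedWords, Set.mem_ofPred_eq] at hσ ⊢
  omega

lemma boundedWords_succ_succ (a b : ℕ) :
    boundedWords (a + 1) (b + 1) =
      insert [] (List.cons false '' boundedWords a (b + 1) ∪
        List.cons true '' boundedWords (a + 1) b) := by
  ext σ
  rcases σ with _ | ⟨_ | _, σ⟩ <;> simp [boundedWords]

lemma ncard_boundedWords_add_one (a b : ℕ) :
    (boundedWords a b).ncard + 1 = (a + b).choose a := by
  induction a generalizing b with
  | zero => simp [boundedWords]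
  | succ a iha =>
    induction b with
    | zero => simp [boundedWords]
    | succ b ihb =>
      have hdisj : Disjoint (List.cons false '' boundedWords a (b + 1))
          (List.cons true '' boundedWords (a + 1) b) := by
        simp [Set.disjoint_left]
      have hfin₁ := (boundedWords_finite a (b + 1)).image (List.cons false)
      have hfin₂ := (boundedWords_finite (a + 1) b).image (List.cons true)
      rw [boundedWords_succ_succ, Set.ncard_insert_of_notMem (by simp) (hfin₁.union hfin₂),
        Set.ncard_union_eq hdisj hfin₁ hfin₂,
        Set.ncard_image_of_injective _ List.cons_injective,
        Set.ncard_image_of_injective _ List.cons_injective,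
        show a + 1 + (b + 1) = a + (b + 1) + 1 by omega, Nat.choose_succ_succ', ← iha (b + 1),
        show a + (b + 1) = a + 1 + b by omega, ← ihb]
      omega

lemma setCond_replicate_false_iff (e : Finset ℕ) (j k : ℕ) :
    setCond e j (List.replicate k false) = true ↔ Icc j (j + k) ⊆ e := by
  induction k generalizing j with
  | zero => simp [setCond]
  | succ k ih =>
    rw [List.replicate_succ, setCond, Bool.and_eq_true, decide_eq_true_eq, ih (j + 1),
      show j + (k + 1) = j + 1 + k by omega,
      ← Finset.insert_Icc_add_one_left_eq_Icc (show j ≤ j + 1 + k by omega), insert_subset_iff]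

lemma setCond_replicate_true_iff (e : Finset ℕ) (j k : ℕ) :
    setCond e j (List.replicate k true) = true ↔ ¬Disjoint (Icc j (j + k)) e := by
  induction k generalizing j with
  | zero => simp [setCond]
  | succ k ih =>
    rw [List.replicate_succ, setCond, Bool.or_eq_true, decide_eq_true_eq, ih (j + 1),
      show j + (k + 1) = j + 1 + k by omega,
      ← Finset.insert_Icc_add_one_left_eq_Icc (show j ≤ j + 1 + k by omega),
      disjoint_insert_left]
    tauto

namespace Theta

def code (σ : List Bool) : List ℕ := σ.map symCode ++ [1]

lemma code_injective : Function.Injective code := by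
  intro σ τ h
  refine List.map_injective_iff.2 (fun a b hab => ?_) (List.append_inj_left' h rfl)
  cases a <;> cases b <;> simp_all [symCode]

lemma code_cons (b : Bool) (σ : List Bool) : code (b :: σ) = symCode b :: code σ := rfl

lemma code_nil : code [] = [1] := rfl

lemma code_lt_code_replicate_false {k : ℕ} {σ : List Bool} :
    code σ < code (List.replicate k false) ↔ List.replicate (k + 1) false <+: σ := by
  induction k generalizing σ with
  | zero =>
    rcases σ with _ | ⟨_ | _, σ⟩ <;>
      simp [code_cons, code_nil, symCode, List.cons_lt_cons_iff]
  | succ k ih =>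
    rcases σ with _ | ⟨_ | _, σ⟩ <;>
      simp [List.replicate_succ, code_cons, code_nil, symCode, List.cons_lt_cons_iff, ih]

lemma code_map_not_lt_iff {σ τ : List Bool} :
    code (σ.map not) < code (τ.map not) ↔ code τ < code σ := by
  induction σ generalizing τ with
  | nil =>
    rcases τ with _ | ⟨_ | _, τ⟩ <;>
      simp [code_cons, code_nil, symCode, List.cons_lt_cons_iff]
  | cons a σ ih =>
    rcases τ with _ | ⟨b, τ⟩
    · cases a <;> simp [code_cons, code_nil, symCode, List.cons_lt_cons_iff]
    · cases a <;> cases b <;> simp [code_cons, symCode, List.cons_lt_cons_iff, ih]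

def key : Theta → WithBot (WithTop (List ℕ))
  | alpha => ⊥
  | seq σ => ((code σ : WithTop (List ℕ)) : WithBot (WithTop (List ℕ)))
  | omega => ((⊤ : WithTop (List ℕ)) : WithBot (WithTop (List ℕ)))

lemma key_injective : Function.Injective key := by
  rintro (_ | σ | _) (_ | τ | _) h <;> simp_all [key, code_injective.eq_iff]

instance : LinearOrder Theta := LinearOrder.lift' key key_injective

lemma lt_iff_key_lt {x y : Theta} : x < y ↔ x.key < y.key := Iff.rfl

lemma lt_iff_lt {x y : Theta} : x.lt y ↔ x < y := by
  rcases x with _ | σ | _ <;> rcases y with _ | τ | _ <;>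
    simp [Theta.lt, lt_iff_key_lt, key, code, WithBot.coe_lt_coe, lt_top_iff_ne_top]

lemma bar_bar (x : Theta) : x.bar.bar = x := by
  rcases x with _ | σ | _ <;> simp [bar, Function.comp_def]

lemma valid_bar {r : ℕ} {x : Theta} : x.bar.valid r ↔ x.valid r := by
  rcases x with _ | σ | _
  case seq =>
    have hf : (σ.map not).count false = σ.count true :=
      List.count_map_of_injective σ not Bool.not_injective true
    have ht : (σ.map not).count true = σ.count false :=
      List.count_map_of_injective σ not Bool.not_injective false
    simp only [bar, valid, hf, ht, and_comm]
  all_goals simp [bar, valid]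

lemma bar_lt_bar_iff {x y : Theta} : x.bar < y.bar ↔ y < x := by
  rcases x with _ | σ | _ <;> rcases y with _ | τ | _ <;> simp only [← lt_iff_lt, Theta.lt, bar]
  exact code_map_not_lt_iff

lemma valid_seq_replicate {r k : ℕ} {b : Bool} (hk : k < r) :
    (seq (List.replicate k b)).valid r := by
  cases b <;> simp [valid, List.count_replicate] <;> omega

lemma setOf_valid (r : ℕ) :
    {x : Theta | x.valid r} = insert alpha (insert omega (seq '' boundedWords r r)) := by
  ext (_ | σ | _) <;> simp [valid, boundedWords]

lemma finite_setOf_valid (r : ℕ) : {x : Theta | x.valid r}.Finite := by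
  rw [setOf_valid]
  exact (((boundedWords_finite r r).image _).insert _).insert _

lemma ncard_setOf_valid (r : ℕ) : {x : Theta | x.valid r}.ncard = (2 * r).choose r + 1 := by
  have hfin := (boundedWords_finite r r).image seq
  rw [setOf_valid, Set.ncard_insert_of_notMem (by simp) (hfin.insert _),
    Set.ncard_insert_of_notMem (by simp) hfin,
    Set.ncard_image_of_injective _ (fun _ _ => seq.inj), two_mul, ← ncard_boundedWords_add_one]

lemma posOf_eq_ncard (r : ℕ) (t : Theta) : posOf r t = {x | x.valid r ∧ x < t}.ncard := by
  simp only [posOf, lt_iff_lt]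

lemma lt_seq_replicate_false_iff {k : ℕ} {x : Theta} :
    x < seq (List.replicate k false) ↔
      x = alpha ∨ ∃ ρ, x = seq (List.replicate (k + 1) false ++ ρ) := by
  rcases x with _ | σ | _ <;> simp only [← lt_iff_lt, Theta.lt]
  · simp
  · change code σ < code (List.replicate k false) ↔ _
    simp [code_lt_code_replicate_false, List.IsPrefix, eq_comm]
  · simp

lemma setOf_valid_lt_seq_replicate_false (r k : ℕ) :
    {x : Theta | x.valid r ∧ x < seq (List.replicate k false)} =
      insert alpha
        ((fun ρ => seq (List.replicate (k + 1) false ++ ρ)) '' boundedWords (r - (k + 1)) r) := by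
  ext x
  simp only [lt_seq_replicate_false_iff, Set.mem_ofPred_eq, Set.mem_insert_iff, Set.mem_image]
  constructor
  · rintro ⟨hx, rfl | ⟨ρ, rfl⟩⟩
    · exact Or.inl rfl
    · refine Or.inr ⟨ρ, ?_, rfl⟩
      simp [valid, boundedWords, List.count_replicate] at hx ⊢
      omega
  · rintro (rfl | ⟨ρ, hρ, rfl⟩)
    · exact ⟨trivial, Or.inl rfl⟩
    · refine ⟨?_, Or.inr ⟨ρ, rfl⟩⟩
      simp [valid, boundedWords, List.count_replicate] at hρ ⊢
      omega

lemma posOf_seq_replicate_false (r k : ℕ) :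
    posOf r (seq (List.replicate k false)) = (r - (k + 1) + r).choose r := by
  rw [posOf_eq_ncard, setOf_valid_lt_seq_replicate_false,
    Set.ncard_insert_of_notMem (by simp) ((boundedWords_finite _ _).image _),
    Set.ncard_image_of_injective _ (fun _ _ h => List.append_cancel_left (seq.inj h)),
    ncard_boundedWords_add_one, Nat.choose_symm_add]

lemma posOf_bar_eq_ncard_gt (r : ℕ) (t : Theta) :
    posOf r t.bar = {x | x.valid r ∧ t < x}.ncard := by
  have hbar : Function.Involutive bar := bar_bar
  have hpre : {x | x.valid r ∧ t < x} = bar ⁻¹' {x | x.valid r ∧ x < t.bar} := by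
    ext x
    simp [valid_bar, bar_lt_bar_iff]
  rw [hpre, Set.ncard_preimage_of_injective_subset_range hbar.injective
    (by simp [hbar.surjective.range_eq]), posOf_eq_ncard]

lemma posOf_add_one_add_posOf_bar {r : ℕ} {t : Theta} (ht : t.valid r) :
    posOf r t + 1 + posOf r t.bar = (2 * r).choose r + 1 := by
  rw [posOf_bar_eq_ncard_gt, posOf_eq_ncard, ← ncard_setOf_valid]
  exact ncard_lt_add_one_add_ncard_gt (finite_setOf_valid r) ht

lemma posOf_seq_replicate_true {r k : ℕ} (hk : k < r) :
    posOf r (seq (List.replicate k true)) = (2 * r).choose r - (r - (k + 1) + r).choose r := by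
  have h := posOf_add_one_add_posOf_bar (t := seq (List.replicate k true)) (r := r)
    (valid_seq_replicate hk)
  rw [bar, List.map_replicate, Bool.not_true, posOf_seq_replicate_false] at h
  omega

lemma posOf_injOn (r : ℕ) : Set.InjOn (posOf r) {x | x.valid r} := by
  intro x hx y hy h
  rw [posOf_eq_ncard, posOf_eq_ncard] at h
  exact (strictMonoOn_ncard_lt (finite_setOf_valid r)).injOn hx hy h

lemma card_Tset_seq_replicate_false {n r k : ℕ} (hkr : k + 1 ≤ r) (hkn : k + 1 ≤ n) :
    #((seq (List.replicate k false)).Tset n r) = (n - (k + 1)).choose (r - (k + 1)) := by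
  simp only [Tset, ground, setCond_replicate_false_iff, add_comm 1 k]
  rw [card_filter_powersetCard_subset _ _ _ (Icc_subset_Icc_right hkn) (by simpa using hkr)]
  simp

lemma card_Tset_seq_replicate_true_add_choose {n r k : ℕ} (hkn : k + 1 ≤ n) :
    #((seq (List.replicate k true)).Tset n r) + (n - (k + 1)).choose r = n.choose r := by
  simp only [Tset, ground, setCond_replicate_true_iff, add_comm 1 k]
  simpa using card_filter_powersetCard_not_disjoint_add_choose _ _ r
    (Icc_subset_Icc_right (a := 1) hkn)

end Theta

theorem stmt16_general (r n i : ℕ) (hn : 2 * r ≤ n) (hi1 : 1 ≤ i) (hi2 : i ≤ r)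
    (σ τ : Theta) (hσv : σ.valid r) (hτv : τ.valid r)
    (hσ : Theta.posOf r σ = Nat.choose (2 * r - i) r)
    (hτ : Theta.posOf r τ = Nat.choose (2 * r) r - Nat.choose (2 * r - i) (r - i)) :
    (σ.Tset n r).card = Nat.choose (n - i) (r - i) ∧
    (τ.Tset n r).card = ∑ j ∈ Finset.Icc 1 i, Nat.choose (n - j) (r - 1) := by
  obtain ⟨k, rfl⟩ : ∃ k, i = k + 1 := ⟨i - 1, by omega⟩
  obtain ⟨s, rfl⟩ : ∃ s, r = s + 1 := ⟨r - 1, by omega⟩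
  have hk : s + 1 - (k + 1) + (s + 1) = 2 * (s + 1) - (k + 1) := by omega
  rw [← hk, Nat.choose_symm_add] at hτ
  rw [← hk] at hσ
  obtain rfl : σ = .seq (List.replicate k false) :=
    Theta.posOf_injOn _ hσv (Theta.valid_seq_replicate (by omega))
      (by rw [hσ, Theta.posOf_seq_replicate_false])
  obtain rfl : τ = .seq (List.replicate k true) :=
    Theta.posOf_injOn _ hτv (Theta.valid_seq_replicate (by omega))
      (by rw [hτ, Theta.posOf_seq_replicate_true (by omega)])
  refine ⟨Theta.card_Tset_seq_replicate_false hi2 (by omega), ?_⟩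
  have hcard :=
    Theta.card_Tset_seq_replicate_true_add_choose (r := s + 1) (show k + 1 ≤ n by omega)
  have hsum := Nat.sum_Icc_choose_sub_add_choose s (show k + 1 ≤ n by omega)
  rw [Nat.add_sub_cancel]
  omega

/-- `M(C(2r−i, r)) = C(n−i, r−i)` and
`M(C(2r, r) − C(2r−i, r−i)) = C(n−1, r−1) + ⋯ + C(n−i, r−1)`, where `M(p)` is the
size of `T_r` of the element of `Θ_r` at position `p` in the linear order on `Θ_r`. -/
theorem stmt16 (r n i : ℕ) (hr : 1 ≤ r) (hn : 2 * r ≤ n) (hi1 : 1 ≤ i) (hi2 : i ≤ r)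
    (σ τ : Theta) (hσv : σ.valid r) (hτv : τ.valid r)
    (hσ : Theta.posOf r σ = Nat.choose (2 * r - i) r)
    (hτ : Theta.posOf r τ = Nat.choose (2 * r) r - Nat.choose (2 * r - i) (r - i)) :
    (σ.Tset n r).card = Nat.choose (n - i) (r - i) ∧
    (τ.Tset n r).card = ∑ j ∈ Finset.Icc 1 i, Nat.choose (n - j) (r - 1) :=
  stmt16_general r n i hn hi1 hi2 σ τ hσv hτv hσ hτ
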